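/- The normalized volume of Q_n (with respect to the lattice ℤ^{n²} ∩ aff(Q_n), normalized so the standard simplex has volume 1) equals n. -/

import Mathlib

open Matrix Finset Pointwise

variable (n : ℕ) [NeZero n]

/-- Permutation matrix of `σ`: entries `δ_{i, σ(j)}`. -/
def permMat (σ : Equiv.Perm (ZMod n)) : Matrix (ZMod n) (ZMod n) ℝ :=
  Matrix.of fun i j => if i = σ j then 1 else 0

/-- Rotation `x ↦ x + 1` of the regular n-gon with vertex set `ZMod n`. -/
def rot : Equiv.Perm (ZMod n) := Equiv.addRight 1

/-- Reflection `x ↦ -x` of the regular n-gon. -/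
def rfl' : Equiv.Perm (ZMod n) := Equiv.neg (ZMod n)

/-- The dihedral group `D_n ≤ S_n`, symmetries of the regular n-gon. -/
def dihedral : Subgroup (Equiv.Perm (ZMod n)) := Subgroup.closure {rot n, rfl' n}

/-- Adjacency matrix of the n-cycle `C_n`. -/
def cycAdj : Matrix (ZMod n) (ZMod n) ℝ :=
  Matrix.of fun i j => if j = i + 1 ∨ j = i - 1 then 1 else 0

/-- The permutation polytope `DP_n = conv{M_σ : σ ∈ D_n} ⊆ ℝ^{n×n}`. -/
def DP : Set (Matrix (ZMod n) (ZMod n) ℝ) :=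
  convexHull ℝ {M | ∃ σ ∈ dihedral n, M = permMat n σ}

/-- The cyclic shift matrix `R`. -/
def Rmat : Matrix (ZMod n) (ZMod n) ℝ := Matrix.of fun i j => if j = i + 1 then 1 else 0

/-- The `2n` rows of `W = [[I,...,I],[I,R,...,R^{n-1}]]`, viewed as vectors in
`ℝ^{n²} = Matrix (ZMod n) (ZMod n) ℝ`; the first matrix coordinate is the block index. -/
def Wrow : Bool × ZMod n → Matrix (ZMod n) (ZMod n) ℝ
  | (false, k) => Matrix.of fun _ j => if j = k then 1 else 0
  | (true, k) => Matrix.of fun b j => (Rmat n ^ b.val) k j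

/-- The polytope `Q_n ⊆ ℝ^{n²}`. -/
def Qpoly : Set (Matrix (ZMod n) (ZMod n) ℝ) := convexHull ℝ (Set.range (Wrow n))

/-- A point of `ℝ^{n²}` is a lattice point if all its coordinates are integers. -/
def IsInt (x : Matrix (ZMod n) (ZMod n) ℝ) : Prop := ∀ b j, ∃ z : ℤ, x b j = (z : ℝ)

/-!
By the block structure of `W`, a point of `m • Q_n` has coordinates `x b j = λ j + μ (j - b)`
with `λ, μ ≥ 0` summing to `m`. Such a representation is unique up to
`(λ, μ) ↦ (λ - c, μ + c)`, and a lattice point has exactly one representation with natural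
weights and `min λ = 0`. Hence the lattice points of `m • Q_n` are counted by the compositions of
`m` into `2n` parts with some `λ j = 0`, giving
`C(m+2n-1, 2n-1) - C(m+n-1, 2n-1) = ∑_{i<n} C(m+n-1+i, 2n-2) ~ n m^(2n-2) / (2n-2)!`.
-/

open Filter Topology Asymptotics

lemma mem_smul_convexHull_range_iff {ι E : Type*} [Fintype ι] [AddCommGroup E] [Module ℝ E]
    (v : ι → E) {t : ℝ} (ht : 0 < t) {x : E} :
    x ∈ t • convexHull ℝ (Set.range v) ↔
      ∃ w : ι → ℝ, (∀ i, 0 ≤ w i) ∧ ∑ i, w i = t ∧ ∑ i, w i • v i = x := by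
  classical
  rw [Set.mem_smul_set]
  constructor
  · rintro ⟨y, hy, rfl⟩
    obtain ⟨s, w, hw0, hw1, rfl⟩ := (convexHull_range_eq_exists_affineCombination v).subset hy
    refine ⟨fun i => if i ∈ s then t * w i else 0, fun i => ?_, ?_, ?_⟩
    · dsimp only
      split_ifs with hi
      exacts [mul_nonneg ht.le (hw0 i hi), le_rfl]
    · rw [sum_ite_mem, univ_inter, ← mul_sum, hw1, mul_one]
    · rw [affineCombination_eq_linear_combination _ _ _ hw1, smul_sum]
      simp [ite_smul, sum_ite_mem, mul_smul]
  · rintro ⟨w, hw0, hw1, rfl⟩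
    refine ⟨∑ i, (w i / t) • v i, mem_convexHull_of_exists_fintype (fun i => w i / t) v
      (fun i => div_nonneg (hw0 i) ht.le) ?_ (fun i => Set.mem_range_self i) rfl, ?_⟩
    · rw [← sum_div, hw1, div_self ht.ne']
    · simp [smul_sum, smul_smul, mul_div_cancel₀ _ ht.ne']

lemma card_piAntidiag_univ (ι : Type*) [Fintype ι] [DecidableEq ι] (m : ℕ) :
    #(piAntidiag (univ : Finset ι) m) = (Fintype.card ι + m - 1).choose m := by
  rw [← map_sym_eq_piAntidiag, card_map, sym_univ, card_univ, Sym.card_sym_eq_choose]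

lemma card_filter_le_piAntidiag_univ {ι : Type*} [Fintype ι] [DecidableEq ι] (g : ι → ℕ)
    (m : ℕ) :
    #{f ∈ piAntidiag (univ : Finset ι) (m + ∑ i, g i) | ∀ i, g i ≤ f i} =
      #(piAntidiag (univ : Finset ι) m) := by
  refine card_nbij' (fun f => f - g) (fun f => f + g) ?_ ?_ ?_ ?_
  · intro f hf
    simp only [coe_filter, mem_piAntidiag, mem_univ, implies_true, and_true] at hf
    simp only [mem_coe, mem_piAntidiag, mem_univ, implies_true, and_true, Pi.sub_apply]
    rw [sum_tsub_distrib _ fun i _ => hf.2 i, hf.1, Nat.add_sub_cancel]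
  · intro f hf
    simp only [mem_coe, mem_piAntidiag, mem_univ, implies_true, and_true] at hf
    simp [sum_add_distrib, hf]
  · intro f hf
    simp only [coe_filter, mem_piAntidiag] at hf
    funext i
    simp [Nat.sub_add_cancel (hf.2 i)]
  · intro f _
    funext i
    simp

lemma choose_add_sum_range_choose (a k s : ℕ) :
    a.choose (k + 1) + ∑ i ∈ range s, (a + i).choose k = (a + s).choose (k + 1) := by
  induction s with
  | zero => simp
  | succ s ih => rw [sum_range_succ, ← add_assoc, ih, ← add_assoc, Nat.choose_succ_succ', add_comm]

lemma tendsto_factorial_mul_choose_add_div_pow (k c : ℕ) :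
    Tendsto (fun m : ℕ => (k.factorial * (m + c).choose k : ℝ) / (m : ℝ) ^ k) atTop (𝓝 1) := by
  have hshift : (fun m : ℕ => ((m + c : ℕ) : ℝ)) ~[atTop] (fun m : ℕ => (m : ℝ)) := by
    push_cast
    exact IsEquivalent.refl.add_const_of_norm_tendsto_atTop
      (tendsto_norm_atTop_atTop.comp tendsto_natCast_atTop_atTop)
  have hchoose : (fun m : ℕ => ((m + c).choose k : ℝ)) ~[atTop]
      (fun m : ℕ => (m : ℝ) ^ k / k.factorial) :=
    ((isEquivalent_choose k).comp_tendsto (tendsto_add_atTop_nat c)).trans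
      ((hshift.pow k).div IsEquivalent.refl)
  have hne : ∀ᶠ m : ℕ in atTop, (m : ℝ) ^ k / k.factorial ≠ 0 :=
    (eventually_ne_atTop 0).mono fun m hm => by positivity
  refine ((isEquivalent_iff_tendsto_one hne).1 hchoose).congr fun m => ?_
  simp only [Pi.div_apply]
  field_simp

lemma Rmat_pow_apply (t : ℕ) (k j : ZMod n) :
    (Rmat n ^ t) k j = if j = k + t then 1 else 0 := by
  induction t generalizing j with
  | zero => simp [one_apply, eq_comm]
  | succ t ih =>
    rw [pow_succ, mul_apply, sum_eq_single (k + t)]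
    · rw [ih, if_pos rfl, one_mul]
      simp [Rmat, add_assoc]
    · intro l _ hl
      rw [ih, if_neg hl, zero_mul]
    · simp

lemma Wrow_false_apply (k b j : ZMod n) : Wrow n (false, k) b j = if k = j then 1 else 0 := by
  simp [Wrow, eq_comm]

lemma Wrow_true_apply (k b j : ZMod n) :
    Wrow n (true, k) b j = if k = j - b then 1 else 0 := by
  change (Rmat n ^ b.val) k j = _
  simp only [Rmat_pow_apply, ZMod.natCast_zmod_val, eq_sub_iff_add_eq, eq_comm]

lemma sum_smul_Wrow_apply (w : Bool × ZMod n → ℝ) (b j : ZMod n) :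
    (∑ v, w v • Wrow n v) b j = w (false, j) + w (true, j - b) := by
  simp [Matrix.sum_apply, Fintype.sum_prod_type, Wrow_false_apply, Wrow_true_apply, add_comm]

lemma mem_smul_Qpoly_iff {t : ℝ} (ht : 0 < t) {x : Matrix (ZMod n) (ZMod n) ℝ} :
    x ∈ t • Qpoly n ↔
      ∃ w : Bool × ZMod n → ℝ, (∀ v, 0 ≤ w v) ∧ ∑ v, w v = t ∧ ∑ v, w v • Wrow n v = x :=
  mem_smul_convexHull_range_iff (Wrow n) ht

def normalizedWeights (m : ℕ) : Finset (Bool × ZMod n → ℕ) :=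
  {f ∈ piAntidiag univ m | ∃ j, f (false, j) = 0}

lemma exists_normalized_nat_weights {w : Bool × ZMod n → ℝ} (hw : ∀ v, 0 ≤ w v)
    (hint : IsInt n (∑ v, w v • Wrow n v)) :
    ∃ f : Bool × ZMod n → ℕ, (∃ j, f (false, j) = 0) ∧ ∑ v, (f v : ℝ) = ∑ v, w v ∧
      ∑ v, (f v : ℝ) • Wrow n v = ∑ v, w v • Wrow n v := by
  obtain ⟨j₀, -, hj₀⟩ := exists_min_image univ (fun j => w (false, j)) univ_nonempty
  have hp : ∀ j, ∃ a : ℕ, w (false, j) - w (false, j₀) = a := by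
    intro j
    obtain ⟨z₁, hz₁⟩ := hint j j
    obtain ⟨z₀, hz₀⟩ := hint j₀ j₀
    simp only [sum_smul_Wrow_apply, sub_self] at hz₁ hz₀
    have hz : w (false, j) - w (false, j₀) = ((z₁ - z₀ : ℤ) : ℝ) := by
      push_cast [← hz₁, ← hz₀]
      ring
    have hz_nonneg : (0 : ℝ) ≤ ((z₁ - z₀ : ℤ) : ℝ) := hz ▸ sub_nonneg.2 (hj₀ j (mem_univ j))
    lift z₁ - z₀ to ℕ using (by exact_mod_cast hz_nonneg) with a
    exact ⟨a, by simpa using hz⟩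
  have hq : ∀ k, ∃ a : ℕ, w (true, k) + w (false, j₀) = a := by
    intro k
    obtain ⟨z, hz⟩ := hint (j₀ - k) j₀
    rw [sum_smul_Wrow_apply, sub_sub_cancel, add_comm] at hz
    lift z to ℕ using (by exact_mod_cast hz ▸ add_nonneg (hw _) (hw _))
    exact ⟨z, by simpa using hz⟩
  choose p hp using hp
  choose q hq using hq
  refine ⟨fun v => cond v.1 (q v.2) (p v.2), ⟨j₀, ?_⟩, ?_, ?_⟩
  · exact_mod_cast (hp j₀).symm.trans (sub_self _)
  · simp only [Fintype.sum_prod_type, Fintype.sum_bool, cond_true, cond_false, ← hp, ← hq,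
      sum_add_distrib, sum_sub_distrib]
    ring
  · ext b j
    simp only [sum_smul_Wrow_apply, cond_true, cond_false, ← hp, ← hq]
    ring

lemma latticePoints_eq_image {m : ℕ} (hm : 0 < m) :
    {x | x ∈ (m : ℝ) • Qpoly n ∧ IsInt n x} =
      (normalizedWeights n m).image fun f => ∑ v, (f v : ℝ) • Wrow n v := by
  have hm' : (0 : ℝ) < m := Nat.cast_pos.2 hm
  ext x
  simp only [Set.mem_ofPred_eq, mem_smul_Qpoly_iff n hm', coe_image, Set.mem_image, mem_coe,
    normalizedWeights, mem_filter, mem_piAntidiag, mem_univ, implies_true, and_true]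
  constructor
  · rintro ⟨⟨w, hw, hsum, rfl⟩, hint⟩
    obtain ⟨f, hf0, hfsum, hfx⟩ := exists_normalized_nat_weights n hw hint
    exact ⟨f, ⟨by exact_mod_cast hfsum.trans hsum, hf0⟩, hfx⟩
  · rintro ⟨f, ⟨hsum, -⟩, rfl⟩
    refine ⟨⟨fun v => f v, fun v => Nat.cast_nonneg _, by simp only; exact_mod_cast hsum, rfl⟩, ?_⟩
    intro b j
    exact ⟨f (false, j) + f (true, j - b), by simp [sum_smul_Wrow_apply]⟩

lemma injOn_sum_smul_Wrow :
    Set.InjOn (fun f : Bool × ZMod n → ℕ => ∑ v, (f v : ℝ) • Wrow n v)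
      {f | ∃ j, f (false, j) = 0} := by
  rintro f ⟨j₁, hj₁⟩ g ⟨j₂, hj₂⟩ hfg
  have key : ∀ j k, f (false, j) + f (true, k) = g (false, j) + g (true, k) := by
    intro j k
    have h := congrFun (congrFun hfg (j - k)) j
    simp only [sum_smul_Wrow_apply, sub_sub_cancel] at h
    exact_mod_cast h
  have htrue : ∀ k, f (true, k) = g (true, k) := fun k => by
    have := key j₁ k
    have := key j₂ k
    omega
  funext v
  obtain ⟨_ | _, k⟩ := v
  · have := key k 0
    have := htrue 0
    omega
  · exact htrue k

lemma ncard_latticePoints {m : ℕ} (hm : 0 < m) :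
    {x | x ∈ (m : ℝ) • Qpoly n ∧ IsInt n x}.ncard = #(normalizedWeights n m) := by
  rw [latticePoints_eq_image n hm, Set.ncard_coe_finset, card_image_of_injOn]
  exact (injOn_sum_smul_Wrow n).mono fun f hf => (mem_filter.1 hf).2

lemma card_normalizedWeights {m : ℕ} (hm : n ≤ m) :
    #(normalizedWeights n m) = ∑ i ∈ range n, (m + (n - 1) + i).choose (2 * n - 2) := by
  have hn : 1 ≤ n := NeZero.one_le
  have hcard : Fintype.card (Bool × ZMod n) = 2 * n := by simp [ZMod.card, two_mul]
  have hcompl : #{f ∈ piAntidiag (univ : Finset (Bool × ZMod n)) m | ¬∃ j, f (false, j) = 0} =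
      #(piAntidiag (univ : Finset (Bool × ZMod n)) (m - n)) := by
    let g : Bool × ZMod n → ℕ := fun v => cond v.1 0 1
    have hg : ∑ v, g v = n := by simp [g, Fintype.sum_prod_type, ZMod.card]
    rw [← card_filter_le_piAntidiag_univ g, hg, Nat.sub_add_cancel hm]
    congr 1
    refine filter_congr fun f _ => ?_
    simp only [not_exists, g, Prod.forall, Bool.forall_bool, cond_false, cond_true, zero_le,
      implies_true, and_true, Nat.one_le_iff_ne_zero]
  have htelescope := choose_add_sum_range_choose (m + (n - 1)) (2 * n - 2) n
  have htotal := card_filter_add_card_filter_not (fun f => ∃ j, f (false, j) = 0)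
    (s := piAntidiag (univ : Finset (Bool × ZMod n)) m)
  rw [hcompl, card_piAntidiag_univ, card_piAntidiag_univ, hcard] at htotal
  have hbig : (2 * n + m - 1).choose m = (m + (n - 1) + n).choose (2 * n - 2 + 1) := by
    rw [show m + (n - 1) + n = 2 * n + m - 1 by omega]
    exact Nat.choose_symm_of_eq_add (by omega)
  have hsmall : (2 * n + (m - n) - 1).choose (m - n) = (m + (n - 1)).choose (2 * n - 2 + 1) := by
    rw [show m + (n - 1) = 2 * n + (m - n) - 1 by omega]
    exact Nat.choose_symm_of_eq_add (by omega)
  rw [normalizedWeights]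
  omega

theorem Q_normalized_volume_general (n : ℕ) [NeZero n] :
    Filter.Tendsto (fun m : ℕ =>
      ((2 * n - 2).factorial : ℝ) *
        ({x | x ∈ (m : ℝ) • Qpoly n ∧ IsInt n x}.ncard : ℝ) / (m : ℝ) ^ (2 * n - 2))
      Filter.atTop (nhds (n : ℝ)) := by
  have hterms := tendsto_finsetSum (range n) fun i (_ : i ∈ range n) =>
    tendsto_factorial_mul_choose_add_div_pow (2 * n - 2) (n - 1 + i)
  rw [sum_const, card_range, nsmul_one] at hterms
  refine hterms.congr' ?_
  filter_upwards [eventually_ge_atTop n] with m hm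
  rw [ncard_latticePoints n (NeZero.one_le.trans hm), card_normalizedWeights n hm, Nat.cast_sum,
    mul_sum, sum_div]
  simp only [add_assoc]

/-- the normalized volume of `Q_n` equals `n`: the number of lattice points
of `m·Q_n`, multiplied by `(2n-2)!/m^{2n-2}`, tends to `n` as `m → ∞`. -/
theorem Q_normalized_volume (n : ℕ) [NeZero n] (hn : 3 ≤ n) :
    Filter.Tendsto (fun m : ℕ =>
      ((2 * n - 2).factorial : ℝ) *
        ({x | x ∈ (m : ℝ) • Qpoly n ∧ IsInt n x}.ncard : ℝ) / (m : ℝ) ^ (2 * n - 2))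
      Filter.atTop (nhds (n : ℝ)) :=
  Q_normalized_volume_general n
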